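/- Every merge-and-split iteration terminates: there is no infinite sequence of partitions P₀, P₁, P₂, … of the finite player set N in which, for every k, the partition P_{k+1} is obtained from P_k by a single applicable merge operation or a single applicable split operation. -/

import Mathlib

open Finset

/-- A collection over `K`: a finite family of pairwise disjoint nonempty coalitions
whose union is `K`. -/
def IsCollection {N : Type*} [DecidableEq N] (C : Finset (Finset N)) (K : Finset N) : Prop :=
  (∀ S ∈ C, S.Nonempty) ∧
  (∀ S ∈ C, ∀ T ∈ C, S ≠ T → Disjoint S T) ∧
  C.sup id = K

/-- A partition of the (finite) player set `N`. -/
def IsPartition {N : Type*} [Fintype N] [DecidableEq N] (P : Finset (Finset N)) : Prop :=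
  IsCollection P Finset.univ

/-- Payoff of player `i` in collection `C`: `φ S i` for the (unique) coalition `S ∈ C`
containing `i`. -/
noncomputable def payoffIn {N : Type*} (φ : Finset N → N → ℝ)
    (C : Finset (Finset N)) (i : N) : ℝ :=
  letI := Classical.dec (∃ S, S ∈ C ∧ i ∈ S)
  if h : ∃ S, S ∈ C ∧ i ∈ S then φ h.choose i else 0

/-- `C₁` Pareto-dominates `C₂` over the subset `K` (written `C₁ ▷ C₂`). -/
def ParetoDom {N : Type*} (φ : Finset N → N → ℝ) (K : Finset N)
    (C₁ C₂ : Finset (Finset N)) : Prop :=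
  (∀ i ∈ K, payoffIn φ C₂ i ≤ payoffIn φ C₁ i) ∧
  (∃ i ∈ K, payoffIn φ C₂ i < payoffIn φ C₁ i)

/-- `P'` is obtained from `P` by a single applicable merge operation: a subfamily
`F ⊆ P` with at least two coalitions is replaced by its union, and
`{⋃ F} ▷ F` over the union. -/
def MergeStep {N : Type*} [DecidableEq N] (φ : Finset N → N → ℝ)
    (P P' : Finset (Finset N)) : Prop :=
  ∃ F : Finset (Finset N), F ⊆ P ∧ 2 ≤ F.card ∧
    P' = (P \ F) ∪ {F.sup id} ∧
    ParetoDom φ (F.sup id) {F.sup id} F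

/-- `P'` is obtained from `P` by a single applicable split operation: a coalition
`S ∈ P` is replaced by a collection `C` over `S` with at least two coalitions, and
`C ▷ {S}` over `S`. -/
def SplitStep {N : Type*} [DecidableEq N] (φ : Finset N → N → ℝ)
    (P P' : Finset (Finset N)) : Prop :=
  ∃ S ∈ P, ∃ C : Finset (Finset N), IsCollection C S ∧ 2 ≤ C.card ∧
    P' = P.erase S ∪ C ∧
    ParetoDom φ S C {S}

/-- No merge and no split operation is applicable to `P`. -/
def MergeSplitProof {N : Type*} [DecidableEq N] (φ : Finset N → N → ℝ)
    (P : Finset (Finset N)) : Prop :=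
  ∀ P', ¬ MergeStep φ P P' ∧ ¬ SplitStep φ P P'

/-- Collection `C` defects from partition `P`. -/
def Defects {N : Type*} [DecidableEq N] (φ : Finset N → N → ℝ)
    (C P : Finset (Finset N)) : Prop :=
  (∀ i ∈ C.sup id, payoffIn φ P i ≤ payoffIn φ C i) ∧
  (∃ i ∈ C.sup id, payoffIn φ P i < payoffIn φ C i)

/-- `P` is `D_hp`-stable: no collection obtainable from `P` by a single merge or
split operation defects from `P`. -/
def DhpStable {N : Type*} [DecidableEq N] (φ : Finset N → N → ℝ)
    (P : Finset (Finset N)) : Prop :=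
  ∀ P', (MergeStep φ P P' ∨ SplitStep φ P P') → ¬ Defects φ P' P

/-- `P` is `D_c`-stable: no collection over any nonempty subset of `N` defects from `P`. -/
def DcStable {N : Type*} [Fintype N] [DecidableEq N] (φ : Finset N → N → ℝ)
    (P : Finset (Finset N)) : Prop :=
  ∀ K : Finset N, K.Nonempty → ∀ C : Finset (Finset N), IsCollection C K →
    ¬ Defects φ C P

/-! Every applicable merge or split operation weakly raises the payoff of every player and
strictly raises that of some player, so the total payoff `∑ i, payoffIn φ P i` strictly
increases along the iteration. An infinite iteration would therefore visit infinitely many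
distinct partitions, but there are only finitely many families of coalitions. -/

section PayoffIn

variable {N : Type*} (φ : Finset N → N → ℝ) {P A : Finset (Finset N)} {S : Finset N} {i : N}

theorem IsCollection.pairwiseDisjoint [DecidableEq N] {K : Finset N} (hP : IsCollection P K) :
    (P : Set (Finset N)).PairwiseDisjoint id :=
  fun S hS T hT hST => hP.2.1 S hS T hT hST

theorem payoffIn_eq_of_mem (hP : (P : Set (Finset N)).PairwiseDisjoint id) (hS : S ∈ P)
    (hi : i ∈ S) : payoffIn φ P i = φ S i := by
  have h : ∃ T, T ∈ P ∧ i ∈ T := ⟨S, hS, hi⟩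
  obtain ⟨hT, hiT⟩ := h.choose_spec
  rw [payoffIn, dif_pos h, hP.elim hT hS (Finset.not_disjoint_iff.mpr ⟨i, hiT, hi⟩)]

theorem payoffIn_eq_of_subset [DecidableEq N] (hP : (P : Set (Finset N)).PairwiseDisjoint id)
    (hA : A ⊆ P) (hi : i ∈ A.sup id) : payoffIn φ P i = payoffIn φ A i := by
  obtain ⟨T, hT, hiT⟩ := Finset.mem_sup.mp hi
  rw [payoffIn_eq_of_mem φ hP (hA hT) hiT,
    payoffIn_eq_of_mem φ (hP.subset (Finset.coe_subset.mpr hA)) hT hiT]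

end PayoffIn

theorem ParetoDom.sum_lt {N : Type*} {φ : Finset N → N → ℝ} {K : Finset N}
    {C₁ C₂ : Finset (Finset N)} (h : ParetoDom φ K C₁ C₂) :
    ∑ i ∈ K, payoffIn φ C₂ i < ∑ i ∈ K, payoffIn φ C₁ i :=
  Finset.sum_lt_sum h.1 h.2

section Replace

variable {N : Type*} [Fintype N] [DecidableEq N] {φ : Finset N → N → ℝ}
  {P P' : Finset (Finset N)}

/-- `P'` arises from `P` by replacing the subfamily `A` with `B`, both families over `K`. -/
theorem ParetoDom.of_replace {A B : Finset (Finset N)} {K : Finset N} (hP : IsPartition P)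
    (hP' : (P' : Set (Finset N)).PairwiseDisjoint id) (hA : A ⊆ P) (hB : B ⊆ P')
    (hrest : P \ A ⊆ P') (hAK : A.sup id = K) (hBK : B.sup id = K) (hdom : ParetoDom φ K B A) :
    ParetoDom φ Finset.univ P' P := by
  have inside : ∀ i ∈ K,
      payoffIn φ P i = payoffIn φ A i ∧ payoffIn φ P' i = payoffIn φ B i := fun i hi =>
    ⟨payoffIn_eq_of_subset φ hP.pairwiseDisjoint hA (hAK ▸ hi),
      payoffIn_eq_of_subset φ hP' hB (hBK ▸ hi)⟩
  have outside : ∀ i ∉ K, payoffIn φ P' i = payoffIn φ P i := by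
    intro i hi
    obtain ⟨T, hT, hiT⟩ := Finset.mem_sup.mp (hP.2.2.symm ▸ Finset.mem_univ i)
    have hTA : T ∉ A := fun hTA => hi (hAK ▸ Finset.mem_sup.mpr ⟨T, hTA, hiT⟩)
    rw [payoffIn_eq_of_mem φ hP' (hrest (Finset.mem_sdiff.mpr ⟨hT, hTA⟩)) hiT,
      payoffIn_eq_of_mem φ hP.pairwiseDisjoint hT hiT]
  refine ⟨fun i _ => ?_, ?_⟩
  · by_cases hi : i ∈ K
    · rw [(inside i hi).1, (inside i hi).2]
      exact hdom.1 i hi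
    · exact (outside i hi).ge
  · obtain ⟨i, hi, hlt⟩ := hdom.2
    exact ⟨i, Finset.mem_univ i, by rwa [(inside i hi).1, (inside i hi).2]⟩

theorem MergeStep.paretoDom (hP : IsPartition P) (hP' : IsPartition P')
    (h : MergeStep φ P P') : ParetoDom φ Finset.univ P' P := by
  obtain ⟨F, hF, -, rfl, hdom⟩ := h
  exact hdom.of_replace hP hP'.pairwiseDisjoint hF Finset.subset_union_right
    Finset.subset_union_left rfl Finset.sup_singleton

theorem SplitStep.paretoDom (hP : IsPartition P) (hP' : IsPartition P')
    (h : SplitStep φ P P') : ParetoDom φ Finset.univ P' P := by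
  obtain ⟨S, hS, C, hC, -, rfl, hdom⟩ := h
  refine hdom.of_replace hP hP'.pairwiseDisjoint (Finset.singleton_subset_iff.mpr hS)
    Finset.subset_union_right ?_ Finset.sup_singleton hC.2.2
  rw [Finset.sdiff_singleton_eq_erase]
  exact Finset.subset_union_left

end Replace

/-- Every merge-and-split iteration terminates: there is no infinite sequence of
partitions of the finite player set `N` in which each partition is obtained from the
previous one by a single applicable merge or split operation. -/
theorem merge_split_terminates {N : Type*} [Fintype N] [DecidableEq N]
    (φ : Finset N → N → ℝ) :
    ¬ ∃ P : ℕ → Finset (Finset N),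
        (∀ k, IsPartition (P k)) ∧
        (∀ k, MergeStep φ (P k) (P (k + 1)) ∨ SplitStep φ (P k) (P (k + 1))) := by
  rintro ⟨P, hpart, hstep⟩
  have hmono : StrictMono fun k => ∑ i, payoffIn φ (P k) i := by
    refine strictMono_nat_of_lt_succ fun k => ParetoDom.sum_lt ?_
    rcases hstep k with hmerge | hsplit
    · exact hmerge.paretoDom (hpart k) (hpart (k + 1))
    · exact hsplit.paretoDom (hpart k) (hpart (k + 1))
  exact not_injective_infinite_finite P
    (hmono.injective.of_comp (f := fun Q => ∑ i, payoffIn φ Q i))
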